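/- Let (H, Δ, ε) be a bialgebra over a commutative ring k with a triangular universal R-matrix R, let F be a Drinfel'd twist on H, and let A be a left H-module algebra that is braided commutative with respect to R: writing R⁻¹ = Σᵢ uᵢ⊗vᵢ, b·a = Σᵢ (uᵢ▷a)·(vᵢ▷b) for all a, b ∈ A. Then the twisted algebra (A, ⋆_F), where a ⋆_F b := Σⱼ (pⱼ▷a)·(qⱼ▷b) for F⁻¹ = Σⱼ pⱼ⊗qⱼ, is braided commutative with respect to the twisted R-matrix R_F := F₂₁·R·F⁻¹: writing R_F⁻¹ = Σₗ sₗ⊗tₗ, one has b ⋆_F a = Σₗ (sₗ▷a) ⋆_F (tₗ▷b) for all a, b ∈ A. -/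

import Mathlib

/-!
STATEMENT 16: If `(H, Δ, ε)` carries a triangular universal R-matrix `R`, `F` is a
Drinfel'd twist on `H`, and `A` is a braided commutative left `H`-module algebra,
then the twisted algebra `(A, ⋆_F)` is braided commutative with respect to the
twisted R-matrix `R_F = F₂₁·R·F⁻¹`.
-/

open TensorProduct

noncomputable section

namespace Stmt

variable (k : Type*) [CommRing k] (H : Type*) [Ring H] [Bialgebra k H]
variable (A : Type*) [Ring A] [Algebra k A]
variable [Module H A] [IsScalarTower k H A] [SMulCommClass k H A]

/-- The action of `H` on `A` as a `k`-bilinear map. -/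
def actE : H →ₗ[k] A →ₗ[k] A :=
  LinearMap.mk₂ k (fun ξ a => ξ • a)
    (fun ξ η a => add_smul ξ η a)
    (fun c ξ a => smul_assoc c ξ a)
    (fun ξ a b => smul_add ξ a b)
    (fun c ξ a => (smul_comm c ξ a).symm)

/-- The componentwise action of `T ∈ H ⊗ H` on `A ⊗ A`. -/
def act2 (T : H ⊗[k] H) : A ⊗[k] A →ₗ[k] A ⊗[k] A :=
  TensorProduct.homTensorHomMap (RingHom.id k) A A A A
    ((TensorProduct.map (actE k H A) (actE k H A)) T)

/-- For a `k`-bilinear map `Bm` on `A` and `T = Σ u ⊗ v ∈ H ⊗ H`, the bilinear map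
`(a, b) ↦ Σ Bm (u • a) (v • b)` (a "Sweedler sum"). -/
def hodgeL (Bm : A →ₗ[k] A →ₗ[k] A) (T : H ⊗[k] H) : A →ₗ[k] A →ₗ[k] A :=
  (TensorProduct.mk k A A).compr₂ ((TensorProduct.lift Bm).comp (act2 k H A T))

section BialgebraMaps

/-- Comultiplication as an algebra homomorphism. -/
def Δ : H →ₐ[k] H ⊗[k] H := Bialgebra.comulAlgHom k H

/-- Counit as an algebra homomorphism. -/
def ε : H →ₐ[k] k := Bialgebra.counitAlgHom k H

/-- Flip of the two tensor factors of `H ⊗ H`. -/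
def τ : H ⊗[k] H ≃ₐ[k] H ⊗[k] H := Algebra.TensorProduct.comm k H H

/-- Leg embedding `x ↦ x₁₂` of `H ⊗ H` into `H ⊗ H ⊗ H`. -/
def ι₁₂ : H ⊗[k] H →ₐ[k] H ⊗[k] (H ⊗[k] H) :=
  Algebra.TensorProduct.map (AlgHom.id k H) Algebra.TensorProduct.includeLeft

/-- Leg embedding `x ↦ x₁₃` of `H ⊗ H` into `H ⊗ H ⊗ H`. -/
def ι₁₃ : H ⊗[k] H →ₐ[k] H ⊗[k] (H ⊗[k] H) :=
  Algebra.TensorProduct.map (AlgHom.id k H) Algebra.TensorProduct.includeRight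

/-- Leg embedding `x ↦ x₂₃` of `H ⊗ H` into `H ⊗ H ⊗ H`. -/
def ι₂₃ : H ⊗[k] H →ₐ[k] H ⊗[k] (H ⊗[k] H) :=
  Algebra.TensorProduct.includeRight

/-- `Δ ⊗ id : H ⊗ H → H ⊗ H ⊗ H` (re-associated). -/
def Δ₁ : H ⊗[k] H →ₐ[k] H ⊗[k] (H ⊗[k] H) :=
  (Algebra.TensorProduct.assoc k k k H H H).toAlgHom.comp
    (Algebra.TensorProduct.map (Δ k H) (AlgHom.id k H))

/-- `id ⊗ Δ : H ⊗ H → H ⊗ H ⊗ H`. -/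
def Δ₂ : H ⊗[k] H →ₐ[k] H ⊗[k] (H ⊗[k] H) :=
  Algebra.TensorProduct.map (AlgHom.id k H) (Δ k H)

/-- `ε ⊗ id : H ⊗ H → H`. -/
def ε₁ : H ⊗[k] H →ₐ[k] H :=
  (Algebra.TensorProduct.lid k H).toAlgHom.comp
    (Algebra.TensorProduct.map (ε k H) (AlgHom.id k H))

/-- `id ⊗ ε : H ⊗ H → H`. -/
def ε₂ : H ⊗[k] H →ₐ[k] H :=
  (Algebra.TensorProduct.rid k k H).toAlgHom.comp
    (Algebra.TensorProduct.map (AlgHom.id k H) (ε k H))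

end BialgebraMaps

/-! Write `μ_T (a, b)` for the Sweedler sum `hodgeL μ T a b`, so `a ⋆_F b = μ_{F⁻¹} (a, b)`.
The Sweedler sum of `μ_S` over `T` is `μ_{S T}`, and braided commutativity of `μ` gives
`μ_T (b, a) = μ_{R⁻¹ T₂₁} (a, b)`. Hence `b ⋆_F a = μ_{R⁻¹ (F⁻¹)₂₁} (a, b)`, and
`R⁻¹ (F⁻¹)₂₁ = F⁻¹ R_F⁻¹` rewrites this as the Sweedler sum of `⋆_F` over `R_F⁻¹`. -/

section SweedlerSums

variable {k H A}

@[simp]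
lemma act2_tmul_tmul (ξ η : H) (a b : A) :
    act2 k H A (ξ ⊗ₜ η) (a ⊗ₜ b) = (ξ • a) ⊗ₜ (η • b) := by
  simp [act2, actE]

lemma act2_add (S T : H ⊗[k] H) : act2 k H A (S + T) = act2 k H A S + act2 k H A T := by
  simp only [act2, map_add]

lemma act2_mul (S T : H ⊗[k] H) : act2 k H A (S * T) = act2 k H A S ∘ₗ act2 k H A T := by
  induction S using TensorProduct.induction_on with
  | zero => simp [act2]
  | add S₁ S₂ h₁ h₂ => simp only [add_mul, act2_add, h₁, h₂, LinearMap.add_comp]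
  | tmul ξ η =>
    induction T using TensorProduct.induction_on with
    | zero => simp [act2]
    | add T₁ T₂ h₁ h₂ => simp only [mul_add, act2_add, h₁, h₂, LinearMap.comp_add]
    | tmul ξ' η' =>
      ext a b
      simp [Algebra.TensorProduct.tmul_mul_tmul, mul_smul]

lemma hodgeL_apply (Bm : A →ₗ[k] A →ₗ[k] A) (T : H ⊗[k] H) (a b : A) :
    hodgeL k H A Bm T a b = lift Bm (act2 k H A T (a ⊗ₜ b)) :=
  rfl

lemma hodgeL_add (Bm : A →ₗ[k] A →ₗ[k] A) (S T : H ⊗[k] H) :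
    hodgeL k H A Bm (S + T) = hodgeL k H A Bm S + hodgeL k H A Bm T := by
  ext a b
  simp only [hodgeL_apply, act2_add, LinearMap.add_apply, map_add]

lemma lift_hodgeL (Bm : A →ₗ[k] A →ₗ[k] A) (T : H ⊗[k] H) :
    lift (hodgeL k H A Bm T) = lift Bm ∘ₗ act2 k H A T :=
  TensorProduct.ext' fun _ _ => rfl

lemma hodgeL_hodgeL (Bm : A →ₗ[k] A →ₗ[k] A) (S T : H ⊗[k] H) :
    hodgeL k H A (hodgeL k H A Bm S) T = hodgeL k H A Bm (S * T) := by
  ext a b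
  simp only [hodgeL_apply, lift_hodgeL, act2_mul, LinearMap.comp_apply]

lemma hodgeL_flip_τ (Bm : A →ₗ[k] A →ₗ[k] A) (T : H ⊗[k] H) (a b : A) :
    hodgeL k H A Bm.flip (τ k H T) a b = hodgeL k H A Bm T b a := by
  induction T using TensorProduct.induction_on with
  | zero => simp [hodgeL_apply, act2]
  | add T₁ T₂ h₁ h₂ => simp only [map_add, hodgeL_add, LinearMap.add_apply, h₁, h₂]
  | tmul ξ η => simp [hodgeL_apply, τ]

lemma hodgeL_swap_of_braided {Bm : A →ₗ[k] A →ₗ[k] A} {Rinv : H ⊗[k] H}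
    (hbc : ∀ a b : A, Bm b a = hodgeL k H A Bm Rinv a b) (T : H ⊗[k] H) (a b : A) :
    hodgeL k H A Bm T b a = hodgeL k H A Bm (Rinv * τ k H T) a b := by
  have hflip : hodgeL k H A Bm Rinv = Bm.flip := LinearMap.ext₂ fun a b => (hbc a b).symm
  rw [← hodgeL_hodgeL, hflip, hodgeL_flip_τ]

end SweedlerSums

theorem twisted_braided_commutativity
    -- `Rm` is a triangular universal R-matrix:
    (Rm Rm' : H ⊗[k] H)
    (hR' : Rm' * Rm = 1)
    -- `A` is braided commutative with respect to `Rm`: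
    (hbc : ∀ a b : A, b * a = hodgeL k H A (LinearMap.mul k A) Rm' a b)
    -- `F` is a Drinfel'd twist on `H`:
    (F Finv : H ⊗[k] H)
    (hF' : Finv * F = 1) :
    -- `(A, ⋆_F)` is braided commutative with respect to `R_F = F₂₁·Rm·F⁻¹`:
    ∀ RFinv : H ⊗[k] H,
      (τ k H F * Rm * Finv) * RFinv = 1 → RFinv * (τ k H F * Rm * Finv) = 1 →
      ∀ a b : A,
        hodgeL k H A (LinearMap.mul k A) Finv b a =
          hodgeL k H A (hodgeL k H A (LinearMap.mul k A) Finv) RFinv a b := by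
  intro RFinv hRF _ a b
  have hτF : τ k H Finv * τ k H F = 1 := by rw [← map_mul, hF', map_one]
  have hRFinv : Finv * RFinv = Rm' * τ k H Finv :=
    calc Finv * RFinv = Rm' * (τ k H Finv * τ k H F) * Rm * Finv * RFinv := by
          rw [hτF, mul_one, hR', one_mul]
      _ = Rm' * τ k H Finv * (τ k H F * Rm * Finv * RFinv) := by noncomm_ring
      _ = Rm' * τ k H Finv := by rw [hRF, mul_one]
  rw [hodgeL_swap_of_braided hbc, ← hRFinv, hodgeL_hodgeL]

end Stmt
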